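/- arXiv:2410.02034 — 2 statements merged into one kernel-verified Lean document; each statement's English description precedes it below -/
import Mathlib

section
/- Let A be a primitive J(α,β)-axial algebra. Then A is spanned as an F-vector space by its primitive J(α,β)-axes. -/
variable (F : Type*) [Field F] (A : Type*) [NonUnitalNonAssocCommRing A]
  [Module F A] [SMulCommClass F A A] [IsScalarTower F A A]

/-- The `l`-eigenspace of the left multiplication operator `ad_a`. -/
def eigSp (a : A) (l : F) : Submodule F A where
  carrier := {x | a * x = l • x}
  add_mem' := by
    intro x y hx hy
    simp only [Set.mem_setOf_eq] at *
    rw [mul_add, hx, hy, smul_add]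
  zero_mem' := by simp
  smul_mem' := by
    intro c x hx
    simp only [Set.mem_setOf_eq] at *
    rw [mul_smul_comm, hx, smul_comm]

/-- `a` is a `J(α,β)`-axis: an idempotent whose adjoint is semisimple with
eigenvalues among `1, α, β`, satisfying the fusion law `J(α,β)`. -/
structure IsJAxis (α β : F) (a : A) : Prop where
  idem : a * a = a
  decomp : eigSp F A a 1 ⊔ eigSp F A a α ⊔ eigSp F A a β = ⊤
  f11 : ∀ x ∈ eigSp F A a 1, ∀ y ∈ eigSp F A a 1, x * y ∈ eigSp F A a 1
  f1a : ∀ x ∈ eigSp F A a 1, ∀ y ∈ eigSp F A a α, x * y ∈ eigSp F A a α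
  f1b : ∀ x ∈ eigSp F A a 1, ∀ y ∈ eigSp F A a β, x * y ∈ eigSp F A a β
  faa : ∀ x ∈ eigSp F A a α, ∀ y ∈ eigSp F A a α, x * y ∈ eigSp F A a 1 ⊔ eigSp F A a α
  fab : ∀ x ∈ eigSp F A a α, ∀ y ∈ eigSp F A a β, x * y ∈ eigSp F A a β
  fbb : ∀ x ∈ eigSp F A a β, ∀ y ∈ eigSp F A a β, x * y ∈ eigSp F A a 1 ⊔ eigSp F A a α

/-- A primitive `J(α,β)`-axis: `A_1(a) = F·a`. -/
def IsPrimJAxis (α β : F) (a : A) : Prop :=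
  IsJAxis F A α β a ∧ eigSp F A a 1 = Submodule.span F {a}

/-- `A` is a primitive `J(α,β)`-axial algebra: generated as an `F`-algebra by a
set of primitive `J(α,β)`-axes. -/
def IsJAxialAlg (α β : F) : Prop :=
  ∃ S : Set A, (∀ a ∈ S, IsPrimJAxis F A α β a) ∧ NonUnitalAlgebra.adjoin F S = ⊤

/-- The `(⋆)` condition: for any two primitive axes `a, b`, writing
`b = x • a + bα + bβ`, the projection of `a` onto `A_1(b)` equals `x • b`. -/
def StarCond (α β : F) : Prop :=
  ∀ a b : A, IsPrimJAxis F A α β a → IsPrimJAxis F A α β b →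
    ∀ x : F, ∀ bα ∈ eigSp F A a α, ∀ bβ ∈ eigSp F A a β, b = x • a + bα + bβ →
      ∃ aα ∈ eigSp F A b α, ∃ aβ ∈ eigSp F A b β, a = x • b + aα + aβ

/-- A Frobenius form: a nonzero symmetric bilinear form that associates with
the product. -/
def IsFrobenius (B : A →ₗ[F] A →ₗ[F] F) : Prop :=
  B ≠ 0 ∧ (∀ u v, B u v = B v u) ∧ ∀ u v w, B u (v * w) = B (u * v) w

/-- `τ` is the Miyamoto involution associated to the axis `a`: it fixes
`A_1(a) ⊕ A_α(a)` pointwise and negates `A_β(a)`. -/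
def IsMiyamoto (α β : F) (a : A) (τ : A →ₗ[F] A) : Prop :=
  (∀ x ∈ eigSp F A a 1 ⊔ eigSp F A a α, τ x = x) ∧ ∀ x ∈ eigSp F A a β, τ x = -x


set_option linter.unusedSectionVars false
section Aux
variable {F A}

lemma eig_mem {a x : A} {l : F} : x ∈ eigSp F A a l ↔ a * x = l • x := Iff.rfl

lemma eig_disjoint {α β : F} (hα1 : α ≠ 1) (hβ1 : β ≠ 1) (hαβ : α ≠ β) (a : A) :
    Disjoint (eigSp F A a 1 ⊔ eigSp F A a α) (eigSp F A a β) := by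
  rw [Submodule.disjoint_def]
  intro v hvE hvO
  obtain ⟨p, hp, q, hq, rfl⟩ := Submodule.mem_sup.mp hvE
  rw [eig_mem] at hvO
  rw [mul_add, hp.out, hq.out, one_smul, smul_add] at hvO
  have h1 : (1 - β) • p = (β - α) • q := by
    linear_combination (norm := module) hvO
  have hq1 : q ∈ eigSp F A a 1 := by
    have : q = ((β - α)⁻¹ * (1 - β)) • p := by
      rw [mul_smul, h1, smul_smul, inv_mul_cancel₀ (sub_ne_zero.mpr hαβ.symm), one_smul]
    rw [this]; exact Submodule.smul_mem _ _ hp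
  have hq0 : q = 0 := by
    have h2 : (α - 1) • q = 0 := by
      rw [eig_mem] at hq1
      have h3 : α • q = (1 : F) • q := hq.out.symm.trans hq1
      linear_combination (norm := module) h3
    rcases smul_eq_zero.mp h2 with h | h
    · exact absurd (sub_eq_zero.mp h) hα1
    · exact h
  have hp0 : p = 0 := by
    rw [hq0, smul_zero] at h1
    rcases smul_eq_zero.mp h1 with h | h
    · exact absurd (by linear_combination (sub_eq_zero.mp h)) hβ1.symm
    · exact h
  rw [hp0, hq0, add_zero]

variable {α β : F} {a : A}

lemma mulEE (ha : IsJAxis F A α β a)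
    {p p' : A} (hp : p ∈ eigSp F A a 1 ⊔ eigSp F A a α)
    (hp' : p' ∈ eigSp F A a 1 ⊔ eigSp F A a α) :
    p * p' ∈ eigSp F A a 1 ⊔ eigSp F A a α := by
  obtain ⟨u, hu, v, hv, rfl⟩ := Submodule.mem_sup.mp hp
  obtain ⟨u', hu', v', hv', rfl⟩ := Submodule.mem_sup.mp hp'
  rw [mul_add, add_mul, add_mul]
  refine add_mem (add_mem ?_ ?_) (add_mem ?_ ?_)
  · exact Submodule.mem_sup_left (ha.f11 _ hu _ hu')
  · exact Submodule.mem_sup_right (mul_comm v u' ▸ ha.f1a _ hu' _ hv)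
  · exact Submodule.mem_sup_right (ha.f1a _ hu _ hv')
  · exact ha.faa _ hv _ hv'

lemma mulEO (ha : IsJAxis F A α β a)
    {p q : A} (hp : p ∈ eigSp F A a 1 ⊔ eigSp F A a α) (hq : q ∈ eigSp F A a β) :
    p * q ∈ eigSp F A a β := by
  obtain ⟨u, hu, v, hv, rfl⟩ := Submodule.mem_sup.mp hp
  rw [add_mul]
  exact add_mem (ha.f1b _ hu _ hq) (ha.fab _ hv _ hq)

lemma eig_isCompl (ha : IsJAxis F A α β a) (hα1 : α ≠ 1) (hβ1 : β ≠ 1) (hαβ : α ≠ β) :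
    IsCompl (eigSp F A a 1 ⊔ eigSp F A a α) (eigSp F A a β) :=
  ⟨eig_disjoint hα1 hβ1 hαβ a, codisjoint_iff.mpr ha.decomp⟩

/-- The Miyamoto reflection associated to a complement pair. -/
noncomputable def reflMap (E O : Submodule F A) (h : IsCompl E O) : A →ₗ[F] A :=
  (2 : F) • (E.subtype ∘ₗ E.linearProjOfIsCompl O h) - LinearMap.id

lemma reflMap_apply {E O : Submodule F A} (h : IsCompl E O) {p q : A}
    (hp : p ∈ E) (hq : q ∈ O) : reflMap E O h (p + q) = p - q := by
  have h1 : E.linearProjOfIsCompl O h p = ⟨p, hp⟩ :=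
    Submodule.linearProjOfIsCompl_apply_left h ⟨p, hp⟩
  have h2 : E.linearProjOfIsCompl O h q = 0 :=
    Submodule.linearProjOfIsCompl_apply_right h ⟨q, hq⟩
  simp only [reflMap, LinearMap.sub_apply, LinearMap.smul_apply, LinearMap.comp_apply,
    LinearMap.id_apply, map_add, h1, h2, add_zero, Submodule.subtype_apply,
    Submodule.coe_smul, ZeroMemClass.coe_zero, smul_zero]
  module

lemma exists_decomp {E O : Submodule F A} (h : IsCompl E O) (x : A) :
    ∃ p ∈ E, ∃ q ∈ O, x = p + q := by
  have : x ∈ E ⊔ O := by rw [codisjoint_iff.mp h.codisjoint]; trivial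
  obtain ⟨p, hp, q, hq, hx⟩ := Submodule.mem_sup.mp this
  exact ⟨p, hp, q, hq, hx.symm⟩

lemma reflMap_mul (ha : IsJAxis F A α β a)
    (h : IsCompl (eigSp F A a 1 ⊔ eigSp F A a α) (eigSp F A a β)) (x y : A) :
    reflMap _ _ h (x * y) = reflMap _ _ h x * reflMap _ _ h y := by
  obtain ⟨p, hp, q, hq, rfl⟩ := exists_decomp h x
  obtain ⟨p', hp', q', hq', rfl⟩ := exists_decomp h y
  have hxy : (p + q) * (p' + q') = (p * p' + q * q') + (p * q' + q * p') := by
    rw [add_mul, mul_add, mul_add]; abel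
  rw [hxy, reflMap_apply h (add_mem (mulEE ha hp hp') (ha.fbb _ hq _ hq'))
      (add_mem (mulEO ha hp hq') (mul_comm q p' ▸ mulEO ha hp' hq)),
    reflMap_apply h hp hq, reflMap_apply h hp' hq', sub_mul, mul_sub, mul_sub]
  abel

lemma reflMap_invol {E O : Submodule F A} (h : IsCompl E O) (x : A) :
    reflMap E O h (reflMap E O h x) = x := by
  obtain ⟨p, hp, q, hq, rfl⟩ := exists_decomp h x
  rw [reflMap_apply h hp hq, sub_eq_add_neg, reflMap_apply h hp (neg_mem hq), sub_neg_eq_add]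

lemma reflMap_bij {E O : Submodule F A} (h : IsCompl E O) :
    Function.Bijective (reflMap E O h) :=
  Function.Involutive.bijective (reflMap_invol h)

lemma map_eigSp {σ : A →ₗ[F] A} (hmul : ∀ x y, σ (x * y) = σ x * σ y)
    (hbij : Function.Bijective σ) (b : A) (l : F) :
    Submodule.map σ (eigSp F A b l) = eigSp F A (σ b) l := by
  ext x
  constructor
  · rintro ⟨v, hv, rfl⟩
    rw [eig_mem, ← hmul, hv.out, map_smul]
  · intro hx
    obtain ⟨v, rfl⟩ := hbij.2 x
    refine ⟨v, ?_, rfl⟩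
    rw [SetLike.mem_coe, eig_mem]
    apply hbij.1
    rw [hmul, map_smul]
    exact hx.out

lemma primAxis_map {σ : A →ₗ[F] A} (hmul : ∀ x y, σ (x * y) = σ x * σ y)
    (hbij : Function.Bijective σ) {b : A} (hb : IsPrimJAxis F A α β b) :
    IsPrimJAxis F A α β (σ b) := by
  obtain ⟨hax, hprim⟩ := hb
  have hme : ∀ l : F, Submodule.map σ (eigSp F A b l) = eigSp F A (σ b) l :=
    map_eigSp hmul hbij b
  have hmem : ∀ {l : F} {x : A}, x ∈ eigSp F A (σ b) l → ∃ v ∈ eigSp F A b l, σ v = x := by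
    intro l x hx
    rw [← hme l] at hx
    exact hx
  constructor
  · constructor
    · rw [← hmul, hax.idem]
    · rw [← hme 1, ← hme α, ← hme β, ← Submodule.map_sup, ← Submodule.map_sup, hax.decomp,
        Submodule.map_top, LinearMap.range_eq_top.mpr hbij.2]
    · intro x hx y hy
      obtain ⟨u, hu, rfl⟩ := hmem hx
      obtain ⟨v, hv, rfl⟩ := hmem hy
      rw [← hme 1, ← hmul]
      exact ⟨u * v, hax.f11 _ hu _ hv, rfl⟩
    · intro x hx y hy
      obtain ⟨u, hu, rfl⟩ := hmem hx
      obtain ⟨v, hv, rfl⟩ := hmem hy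
      rw [← hme α, ← hmul]
      exact ⟨u * v, hax.f1a _ hu _ hv, rfl⟩
    · intro x hx y hy
      obtain ⟨u, hu, rfl⟩ := hmem hx
      obtain ⟨v, hv, rfl⟩ := hmem hy
      rw [← hme β, ← hmul]
      exact ⟨u * v, hax.f1b _ hu _ hv, rfl⟩
    · intro x hx y hy
      obtain ⟨u, hu, rfl⟩ := hmem hx
      obtain ⟨v, hv, rfl⟩ := hmem hy
      rw [← hme 1, ← hme α, ← Submodule.map_sup, ← hmul]
      exact ⟨u * v, hax.faa _ hu _ hv, rfl⟩
    · intro x hx y hy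
      obtain ⟨u, hu, rfl⟩ := hmem hx
      obtain ⟨v, hv, rfl⟩ := hmem hy
      rw [← hme β, ← hmul]
      exact ⟨u * v, hax.fab _ hu _ hv, rfl⟩
    · intro x hx y hy
      obtain ⟨u, hu, rfl⟩ := hmem hx
      obtain ⟨v, hv, rfl⟩ := hmem hy
      rw [← hme 1, ← hme α, ← Submodule.map_sup, ← hmul]
      exact ⟨u * v, hax.fbb _ hu _ hv, rfl⟩
  · rw [← hme 1, hprim, Submodule.map_span, Set.image_singleton]

end Aux

theorem spanned_by_primitive_axes (α β : F) (h2 : (2 : F) ≠ 0)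
    (hα1 : α ≠ 1) (hβ1 : β ≠ 1) (hαβ : α ≠ β)
    (hA : IsJAxialAlg F A α β) :
    Submodule.span F {c : A | IsPrimJAxis F A α β c} = ⊤ := by
  obtain ⟨S, hS, hadj⟩ := hA
  set M := Submodule.span F {c : A | IsPrimJAxis F A α β c} with hM
  have haxM : ∀ c : A, IsPrimJAxis F A α β c → c ∈ M := fun c hc => Submodule.subset_span hc
  have hprod : ∀ a b : A, IsPrimJAxis F A α β a → IsPrimJAxis F A α β b → a * b ∈ M := by
    intro a b ha hb
    have hcompl := eig_isCompl ha.1 hα1 hβ1 hαβ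
    have hmulτ := reflMap_mul ha.1 hcompl
    have hbijτ := reflMap_bij hcompl
    set τ := reflMap _ _ hcompl with hτ
    obtain ⟨p, hp, q, hq, hbpq⟩ := exists_decomp hcompl b
    have hτb : τ b = p - q := by rw [hbpq]; exact reflMap_apply hcompl hp hq
    have hτbM : τ b ∈ M := haxM _ (primAxis_map hmulτ hbijτ hb)
    have hbM : b ∈ M := haxM _ hb
    have haM : a ∈ M := haxM _ ha
    have h2p : (2 : F) • p = b + τ b := by rw [hτb, hbpq]; module
    have hpM : p ∈ M := by
      rw [← inv_smul_smul₀ h2 p]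
      exact Submodule.smul_mem _ _ (h2p ▸ add_mem hbM hτbM)
    have hqM : q ∈ M := by
      have hqe : q = b - p := by rw [hbpq]; abel
      rw [hqe]; exact sub_mem hbM hpM
    obtain ⟨p1, hp1, pα, hpα, hps⟩ := Submodule.mem_sup.mp hp
    have hp1' := hp1
    rw [ha.2] at hp1'
    obtain ⟨x, hx⟩ := Submodule.mem_span_singleton.mp hp1'
    have hp1M : p1 ∈ M := by rw [← hx]; exact Submodule.smul_mem _ _ haM
    have hpαM : pα ∈ M := by
      have : pα = p - p1 := by rw [← hps]; abel
      rw [this]; exact sub_mem hpM hp1M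
    have hab : a * b = p1 + α • pα + β • q := by
      rw [hbpq, ← hps, mul_add, mul_add, hp1.out, hpα.out, hq.out, one_smul]
    rw [hab]
    exact add_mem (add_mem hp1M (Submodule.smul_mem _ _ hpαM)) (Submodule.smul_mem _ _ hqM)
  have hclosed : ∀ x ∈ M, ∀ y ∈ M, x * y ∈ M := by
    intro x hx
    induction hx using Submodule.span_induction with
    | mem u hu =>
      intro y hy
      induction hy using Submodule.span_induction with
      | mem v hv => exact hprod _ _ hu hv
      | zero => rw [mul_zero]; exact M.zero_mem
      | add y z _ _ h1 h2 => rw [mul_add]; exact add_mem h1 h2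
      | smul c y _ h1 => rw [mul_smul_comm]; exact Submodule.smul_mem _ _ h1
    | zero => intro y _; rw [zero_mul]; exact M.zero_mem
    | add u v _ _ h1 h2 => intro y hy; rw [add_mul]; exact add_mem (h1 y hy) (h2 y hy)
    | smul c u _ h1 => intro y hy; rw [smul_mul_assoc]; exact Submodule.smul_mem _ _ (h1 y hy)
  have hsub : NonUnitalAlgebra.adjoin F S ≤
      M.toNonUnitalSubalgebra (fun u v hu hv => hclosed u hu v hv) :=
    NonUnitalAlgebra.adjoin_le (fun s hs => haxM s (hS s hs))
  rw [hadj] at hsub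
  rw [eq_top_iff]
  intro z _
  exact hsub (Set.mem_univ z : z ∈ (⊤ : NonUnitalSubalgebra F A))
end

section
/- Let A be a primitive J(α,β)-axial algebra satisfying the (⋆) condition, containing two distinct primitive J(α,β)-axes. If A is baric, i.e. there exists an F-algebra homomorphism w : A → F with w(c) = 1 for every primitive axis c ∈ A, then α = 1/2, or β = 1/2, or β = 2 − 3α. -/
variable (F : Type*) [Field F] (A : Type*) [NonUnitalNonAssocCommRing A]
  [Module F A] [SMulCommClass F A A] [IsScalarTower F A A]

set_option linter.unusedSectionVars false in
theorem smul_cancel {c : F} {v : A} (hc : c ≠ 0) (h : c • v = 0) : v = 0 := by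
  have := congrArg (c⁻¹ • ·) h
  simpa [smul_smul, inv_mul_cancel₀ hc] using this

theorem eig_inter {α β : F} (hα1 : α ≠ 1) (hβ1 : β ≠ 1) (hαβ : α ≠ β) (a u : A)
    (hu : u ∈ eigSp F A a 1 ⊔ eigSp F A a α) (huβ : u ∈ eigSp F A a β) : u = 0 := by
  obtain ⟨u1, h1, uα, hα, rfl⟩ := Submodule.mem_sup.mp hu
  have e1 : a * u1 = (1:F) • u1 := h1
  have eα : a * uα = α • uα := hα
  have eβ : a * (u1 + uα) = β • (u1 + uα) := huβ
  rw [mul_add, e1, eα] at eβ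
  have key : (1-β) • u1 = (β-α) • uα := by
    linear_combination (norm := module) (1:F) • eβ
  have key2 : (1-β) • u1 = (α*(β-α)) • uα := by
    have h := congrArg (HMul.hMul a) key
    rw [mul_smul_comm, mul_smul_comm, e1, eα] at h
    linear_combination (norm := module) (1:F) • h
  have huα : uα = 0 := by
    have h3 : ((1-α)*(β-α)) • uα = 0 := by
      linear_combination (norm := module) (1:F) • key2 - (1:F) • key
    exact smul_cancel F A (mul_ne_zero (sub_ne_zero.mpr (Ne.symm hα1))
      (sub_ne_zero.mpr (Ne.symm hαβ))) h3
  have hu1 : u1 = 0 := by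
    have h4 : (1-β) • u1 = 0 := by rw [key, huα, smul_zero]
    exact smul_cancel F A (sub_ne_zero.mpr (Ne.symm hβ1)) h4
  rw [hu1, huα, add_zero]
theorem baric_eigenvalue_restriction (α β : F) (h2 : (2 : F) ≠ 0)
    (hα1 : α ≠ 1) (hβ1 : β ≠ 1) (hαβ : α ≠ β)
    (hA : IsJAxialAlg F A α β) (hstar : StarCond F A α β)
    (a b : A) (ha : IsPrimJAxis F A α β a) (hb : IsPrimJAxis F A α β b) (hne : a ≠ b)
    (hbaric : ∃ w : A →ₙₐ[F] F, ∀ c : A, IsPrimJAxis F A α β c → w c = 1) :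
    α = 1 / 2 ∨ β = 1 / 2 ∨ β = 2 - 3 * α := by
  obtain ⟨w, hw⟩ := hbaric
  have hwa := hw a ha
  have hwb := hw b hb
  have hbT : b ∈ eigSp F A a 1 ⊔ eigSp F A a α ⊔ eigSp F A a β := by
    rw [ha.1.decomp]; trivial
  obtain ⟨u, hu, bβ, hbβ, hbdec0⟩ := Submodule.mem_sup.mp hbT
  obtain ⟨b1, hb1, bα, hbα, rfl⟩ := Submodule.mem_sup.mp hu
  obtain ⟨x, rfl⟩ := Submodule.mem_span_singleton.mp (ha.2 ▸ hb1)
  have ea : a * a = a := ha.1.idem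
  have ebα : a * bα = α • bα := hbα
  have ebβ : a * bβ = β • bβ := hbβ
  have hwbα : w bα = 0 := by
    have h := congrArg w ebα
    rw [map_mul, hwa, one_mul, map_smul, smul_eq_mul] at h
    have h' : (1 - α) * w bα = 0 := by linear_combination h
    rcases mul_eq_zero.mp h' with h'' | h''
    · exact absurd (by linear_combination -h'') hα1
    · exact h''
  have hwbβ : w bβ = 0 := by
    have h := congrArg w ebβ
    rw [map_mul, hwa, one_mul, map_smul, smul_eq_mul] at h
    have h' : (1 - β) * w bβ = 0 := by linear_combination h
    rcases mul_eq_zero.mp h' with h'' | h''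
    · exact absurd (by linear_combination -h'') hβ1
    · exact h''
  have hx : x = 1 := by
    have h := congrArg w hbdec0
    simpa [hwa, hwbα, hwbβ, hwb] using h
  have hbdec : b = a + bα + bβ := by rw [← hbdec0, hx, one_smul]
  obtain ⟨aα, haα, aβ, haβ, hadec⟩ :=
    hstar a b ha hb 1 bα hbα bβ hbβ (by rw [one_smul]; exact hbdec)
  rw [one_smul] at hadec
  have eaα : b * aα = α • aα := haα
  have eaβ : b * aβ = β • aβ := haβ
  have E4 : aα + aβ + bα + bβ = 0 := by
    have h : a = (a + bα + bβ) + aα + aβ := by rw [← hbdec]; exact hadec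
    linear_combination (norm := module) (-1:F) • h
  have hab : a * b = a + α • bα + β • bβ := by
    rw [hbdec, mul_add, mul_add, ea, ebα, ebβ]
  have hba : b * a = (a + bα + bβ) + α • aα + β • aβ := by
    calc b * a = b * (b + aα + aβ) := by rw [← hadec]
    _ = b * b + b * aα + b * aβ := by rw [mul_add, mul_add]
    _ = (a + bα + bβ) + α • aα + β • aβ := by rw [hb.1.idem, eaα, eaβ, hbdec]
  have E5 : a + α • bα + β • bβ = (a + bα + bβ) + α • aα + β • aβ := by
    rw [← hab, ← hba, mul_comm]
  have h7 : (β - α) • aβ = (2*α-1) • bα + (α+β-1) • bβ := by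
    linear_combination (norm := module) (-1:F) • E5 - α • E4
  have key6 : bα*bα + bβ*bβ + (bα*bβ + bα*bβ) = (1-2*α) • bα + (1-2*β) • bβ := by
    have h : (a + bα + bβ) * (a + bα + bβ) = a + bα + bβ := by
      rw [← hbdec]; exact hb.1.idem
    simp only [mul_add, add_mul] at h
    rw [ea, ebα, ebβ, mul_comm bα a, mul_comm bβ a, ebα, ebβ, mul_comm bβ bα] at h
    linear_combination (norm := module) (1:F) • h
  by_cases hbz : bβ = 0
  · -- bβ = 0 : derive α = 1/2
    left
    have hbαne : bα ≠ 0 := by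
      intro h0
      apply hne
      rw [hbdec, hbz, h0, add_zero, add_zero]
    have e6 : bα * bα = (1-2*α) • bα := by
      have h := key6
      rw [hbz] at h
      simpa using h
    have h7' : (β-α) • aβ = (2*α-1) • bα := by
      have h := h7
      rwa [hbz, smul_zero, add_zero] at h
    have hcβ : (2*α-1) • bα ∈ eigSp F A b β := by
      rw [← h7']; exact Submodule.smul_mem _ _ haβ
    have hcc_mem : ((2*α-1) • bα) * ((2*α-1) • bα) ∈ eigSp F A b 1 ⊔ eigSp F A b α :=
      hb.1.fbb _ hcβ _ hcβ
    have hcc_val : ((2*α-1) • bα) * ((2*α-1) • bα) = ((2*α-1)*(1-2*α)) • ((2*α-1) • bα) := by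
      rw [smul_mul_assoc, mul_smul_comm, e6]
      module
    have hccβ : ((2*α-1) • bα) * ((2*α-1) • bα) ∈ eigSp F A b β := by
      rw [hcc_val]; exact Submodule.smul_mem _ _ hcβ
    have hcc0 : ((2*α-1) • bα) * ((2*α-1) • bα) = 0 :=
      eig_inter F A hα1 hβ1 hαβ b _ hcc_mem hccβ
    have hs : ((2*α-1)*(1-2*α)*(2*α-1)) • bα = 0 := by
      have h0 := hcc_val.symm.trans hcc0
      rwa [smul_smul] at h0
    have hsc : (2*α-1)*(1-2*α)*(2*α-1) = 0 := by
      by_contra hns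
      exact hbαne (smul_cancel F A hns hs)
    have h21 : 2*α - 1 = 0 := by
      have h3 : (2*α-1)^3 = 0 := by linear_combination -hsc
      exact pow_eq_zero_iff (three_ne_zero) |>.mp h3
    rw [eq_div_iff h2]
    linear_combination h21
  · -- bβ ≠ 0 : derive β = 1/2 ∨ β = 2 - 3α
    have hU0 : bα*bα + bβ*bβ - (1-2*α) • bα = 0 := by
      apply eig_inter F A hα1 hβ1 hαβ a _
        (Submodule.sub_mem _
          (Submodule.add_mem _ (ha.1.faa _ hbα _ hbα) (ha.1.fbb _ hbβ _ hbβ))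
          (Submodule.smul_mem _ _ (Submodule.mem_sup_right hbα)))
      have hrw : bα*bα + bβ*bβ - (1-2*α) • bα = -(bα*bβ + bα*bβ - (1-2*β) • bβ) := by
        linear_combination (norm := module) (1:F) • key6
      rw [hrw]
      exact Submodule.neg_mem _ (Submodule.sub_mem _
        (Submodule.add_mem _ (ha.1.fab _ hbα _ hbβ) (ha.1.fab _ hbα _ hbβ))
        (Submodule.smul_mem _ _ hbβ))
    have T : bα*bβ + bα*bβ = (1-2*β) • bβ := by
      linear_combination (norm := module) (1:F) • key6 - (1:F) • hU0
    have hbbα : b * bα = α • bα + bα*bα + bα*bβ := by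
      rw [hbdec, add_mul, add_mul, ebα, mul_comm bβ bα]
    have hbbβ : b * bβ = β • bβ + bα*bβ + bβ*bβ := by
      rw [hbdec, add_mul, add_mul, ebβ]
    have hK : b * ((β-α) • aβ) = β • ((β-α) • aβ) := by
      rw [mul_smul_comm, eaβ, smul_comm]
    have hK2 : b * ((2*α-1) • bα + (α+β-1) • bβ)
        = β • ((2*α-1) • bα + (α+β-1) • bβ) := by
      rw [← h7]; exact hK
    have hbig : ((2*α-1)*(α-β)) • bα + ((2*α-1) • (bα*bα) + (α+β-1) • (bβ*bβ))
        + (3*α+β-2) • (bα*bβ) = 0 := by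
      have h := hK2
      rw [mul_add, mul_smul_comm, mul_smul_comm, hbbα, hbbβ] at h
      linear_combination (norm := module) (1:F) • h
    have hU'0 : ((2*α-1)*(α-β)) • bα
        + ((2*α-1) • (bα*bα) + (α+β-1) • (bβ*bβ)) = 0 := by
      apply eig_inter F A hα1 hβ1 hαβ a _
        (Submodule.add_mem _
          (Submodule.smul_mem _ _ (Submodule.mem_sup_right hbα))
          (Submodule.add_mem _
            (Submodule.smul_mem _ _ (ha.1.faa _ hbα _ hbα))
            (Submodule.smul_mem _ _ (ha.1.fbb _ hbβ _ hbβ))))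
      have hrw : ((2*α-1)*(α-β)) • bα + ((2*α-1) • (bα*bα) + (α+β-1) • (bβ*bβ))
          = -((3*α+β-2) • (bα*bβ)) := by
        linear_combination (norm := module) (1:F) • hbig
      rw [hrw]
      exact Submodule.neg_mem _ (Submodule.smul_mem _ _ (ha.1.fab _ hbα _ hbβ))
    have hV0 : (3*α+β-2) • (bα*bβ) = 0 := by
      linear_combination (norm := module) (1:F) • hbig - (1:F) • hU'0
    have hfin : ((3*α+β-2)*(1-2*β)) • bβ = 0 := by
      have h1 : (3*α+β-2) • (bα*bβ + bα*bβ) = (3*α+β-2) • ((1-2*β) • bβ) :=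
        congrArg _ T
      linear_combination (norm := module) (2:F) • hV0 - (1:F) • h1
    have hsc : (3*α+β-2)*(1-2*β) = 0 := by
      by_contra hns
      exact hbz (smul_cancel F A hns hfin)
    rcases mul_eq_zero.mp hsc with h' | h'
    · right; right; linear_combination h'
    · right; left
      rw [eq_div_iff h2]
      linear_combination -h'
end
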